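/- arXiv:2201.00865 — 7 statements merged into one kernel-verified Lean document; each statement's English description precedes it below -/
import Mathlib

section
/- There exists a Sarvate-Beam cube of order 2: a 2×2×2 array of nonnegative integers such that the 12 line sums (sums along each of the three axis directions) are exactly the integers 0, 1, ..., 11 in some order. -/
/-- The line sums of an `n × n × n` array `f`: for each direction `d : Fin 3`
and fixed pair of coordinates, the sum over the remaining coordinate. -/
def lineSums (n : ℕ) (f : Fin n → Fin n → Fin n → ℕ) :
    Fin 3 × Fin n × Fin n → ℕ :=
  fun p =>
    if p.1 = 0 then ∑ k, f k p.2.1 p.2.2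
    else if p.1 = 1 then ∑ k, f p.2.1 k p.2.2
    else ∑ k, f p.2.1 p.2.2 k

/-- A Sarvate-Beam cube of order `n`: an `n × n × n` array of nonnegative
integers whose `3n²` line sums are exactly `0, 1, …, 3n² − 1` in some order. -/
def IsSBC (n : ℕ) (f : Fin n → Fin n → Fin n → ℕ) : Prop :=
  Function.Injective (lineSums n f) ∧
  (∀ p, lineSums n f p < 3 * n ^ 2) ∧
  (∀ m < 3 * n ^ 2, ∃ p, lineSums n f p = m)

/-- Its line sums in the three directions are `4 6 5 7`, `1 2 8 11` and `0 3 10 9`. -/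
def sbcTwo : Fin 2 → Fin 2 → Fin 2 → ℕ :=
  ![![![0, 0], ![1, 2]], ![![4, 6], ![4, 5]]]

theorem isSBC_sbcTwo : IsSBC 2 sbcTwo := by
  unfold IsSBC
  decide

/-- There exists a Sarvate-Beam cube of order 2: a `2×2×2` array of nonnegative
integers whose 12 line sums are exactly `0, 1, …, 11` in some order. -/
theorem sbc_two_exists : ∃ f : Fin 2 → Fin 2 → Fin 2 → ℕ, IsSBC 2 f :=
  ⟨sbcTwo, isSBC_sbcTwo⟩
end

section
/- There exists a Sarvate-Beam cube of order 3: a 3×3×3 array of nonnegative integers whose 27 line sums are exactly the integers 0, 1, ..., 26 in some order. -/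
/-- There are exactly `3n²` lines, so injective line sums below `3n²` hit every value. -/
theorem IsSBC.of_injective_of_lt {n : ℕ} {f : Fin n → Fin n → Fin n → ℕ}
    (hinj : Function.Injective (lineSums n f)) (hlt : ∀ p, lineSums n f p < 3 * n ^ 2) :
    IsSBC n f := by
  let g : Fin 3 × Fin n × Fin n → Fin (3 * n ^ 2) := fun p => ⟨lineSums n f p, hlt p⟩
  have hg : Function.Bijective g := by
    rw [Fintype.bijective_iff_injective_and_card]
    refine ⟨fun p q h => hinj (congrArg Fin.val h), ?_⟩
    simp only [Fintype.card_prod, Fintype.card_fin]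
    ring
  refine ⟨hinj, hlt, fun m hm => ?_⟩
  obtain ⟨p, hp⟩ := hg.surjective ⟨m, hm⟩
  exact ⟨p, congrArg Fin.val hp⟩

def sbcThree : Fin 3 → Fin 3 → Fin 3 → ℕ :=
  ![![![2, 0, 6], ![0, 12, 2], ![4, 9, 5]],
    ![![17, 1, 1], ![4, 8, 0], ![2, 0, 14]],
    ![![5, 0, 0], ![0, 0, 0], ![5, 17, 3]]]

theorem isSBC_sbcThree : IsSBC 3 sbcThree :=
  IsSBC.of_injective_of_lt (by decide) (by decide)

/-- There exists a Sarvate-Beam cube of order 3: a `3×3×3` array of nonnegative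
integers whose 27 line sums are exactly `0, 1, …, 26` in some order. -/
theorem sbc_three_exists : ∃ f : Fin 3 → Fin 3 → Fin 3 → ℕ, IsSBC 3 f :=
  ⟨sbcThree, isSBC_sbcThree⟩
end

section
/- For every positive integer m, there exists a (3,2)-GDD of type m^4: a multiset of 3-element blocks on a 4m-point set partitioned into 4 groups of size m, such that same-group pairs have frequency 0 and every cross-group pair has frequency exactly 2. -/
/-!
Over an abelian group `G` of order `m` (here `Fin m` with addition mod `m`), the zero-sum
triples `(a, b, c)` form a transversal design on three groups of size `m`: two coordinates
determine the third, so every pair of points from distinct groups lies in exactly one triple.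
Placing such a design on each of the four ways to choose three of the four groups covers a pair
from groups `s ≠ t` once for each of the two omitted groups different from `s` and `t`.
-/

/-- The frequency of a subset `P` in a multiset of blocks `B`:
the number of blocks (with multiplicity) containing `P`. -/
def pairFreq {V : Type*} [DecidableEq V] (B : Multiset (Finset V)) (P : Finset V) : ℕ :=
  (B.filter (fun b => P ⊆ b)).card

open Finset

lemma pairFreq_sum {V ι : Type*} [DecidableEq V] (s : Finset ι) (B : ι → Multiset (Finset V))
    (P : Finset V) : pairFreq (∑ i ∈ s, B i) P = ∑ i ∈ s, pairFreq (B i) P := by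
  simp only [pairFreq, ← Multiset.countP_eq_card_filter]
  exact map_sum (Multiset.countPAddMonoidHom (P ⊆ ·)) B s

lemma existsUnique_sum_eq_zero_of_ne {G : Type*} [AddCommGroup G] {r r' : Fin 3} (h : r ≠ r')
    (x y : G) : ∃! v : Fin 3 → G, ∑ q, v q = 0 ∧ v r = x ∧ v r' = y := by
  refine ⟨fun q => if q = r then x else if q = r' then y else -(x + y), ?_, ?_⟩
  · fin_cases r <;> fin_cases r' <;> simp [Fin.sum_univ_three, add_comm y x] at h ⊢
  · rintro v ⟨hv, rfl, rfl⟩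
    funext q
    rw [Fin.sum_univ_three] at hv
    fin_cases r <;> fin_cases r' <;> fin_cases q <;> simp at h ⊢ <;>
      rw [← sub_eq_zero, ← hv] <;> abel

section Transversal

variable {G ι : Type*} [DecidableEq G] [DecidableEq ι]

def transversalBlock (e : Fin 3 ↪ ι) (v : Fin 3 → G) : Finset (G × ι) :=
  univ.image fun r => (v r, e r)

lemma card_transversalBlock (e : Fin 3 ↪ ι) (v : Fin 3 → G) : #(transversalBlock e v) = 3 := by
  rw [transversalBlock, card_image_of_injective _ fun r r' h => e.injective (Prod.ext_iff.1 h).2]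
  rfl

lemma mem_transversalBlock_iff {e : Fin 3 ↪ ι} {v : Fin 3 → G} {x : G} {s : ι} :
    (x, s) ∈ transversalBlock e v ↔ ∃ r, e r = s ∧ v r = x := by
  simp [transversalBlock, and_comm]

lemma mem_transversalBlock {e : Fin 3 ↪ ι} {v : Fin 3 → G} {x : G} {r : Fin 3} :
    (x, e r) ∈ transversalBlock e v ↔ v r = x := by
  simp [mem_transversalBlock_iff]

variable [AddCommGroup G] [Fintype G]

variable (G) in
def transversalBlocks (e : Fin 3 ↪ ι) : Multiset (Finset (G × ι)) :=
  ({v | ∑ q, v q = 0} : Finset (Fin 3 → G)).val.map (transversalBlock e)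

lemma pairFreq_transversalBlocks (e : Fin 3 ↪ ι) (P : Finset (G × ι)) :
    pairFreq (transversalBlocks G e) P = #{v | ∑ q, v q = 0 ∧ P ⊆ transversalBlock e v} := by
  simp only [pairFreq, transversalBlocks, filter_val, Multiset.filter_map, Function.comp_apply,
    Multiset.filter_filter, Multiset.card_map, and_comm]
  rfl

lemma pairFreq_transversalBlocks_of_ne (e : Fin 3 ↪ ι) {s t : ι} (hst : s ≠ t) (x y : G) :
    pairFreq (transversalBlocks G e) {(x, s), (y, t)} =
      if s ∈ Set.range e ∧ t ∈ Set.range e then 1 else 0 := by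
  rw [pairFreq_transversalBlocks]
  split_ifs with h
  · obtain ⟨⟨r, rfl⟩, ⟨r', rfl⟩⟩ := h
    simp only [insert_subset_iff, singleton_subset_iff, mem_transversalBlock]
    exact (Fintype.existsUnique_iff_card_one _).1
      (existsUnique_sum_eq_zero_of_ne (ne_of_apply_ne e hst) x y)
  · refine card_eq_zero.2 (filter_eq_empty_iff.2 fun v _ ⟨_, hv⟩ => h ?_)
    simp only [insert_subset_iff, singleton_subset_iff, mem_transversalBlock_iff] at hv
    obtain ⟨⟨r, rfl, -⟩, ⟨r', rfl, -⟩⟩ := hv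
    exact ⟨⟨r, rfl⟩, ⟨r', rfl⟩⟩

lemma pairFreq_transversalBlocks_of_eq (e : Fin 3 ↪ ι) (s : ι) {x y : G} (hxy : x ≠ y) :
    pairFreq (transversalBlocks G e) {(x, s), (y, s)} = 0 := by
  rw [pairFreq_transversalBlocks]
  refine card_eq_zero.2 (filter_eq_empty_iff.2 fun v _ ⟨_, hv⟩ => hxy ?_)
  simp only [insert_subset_iff, singleton_subset_iff, mem_transversalBlock_iff] at hv
  obtain ⟨⟨r, rfl, rfl⟩, ⟨r', hr', rfl⟩⟩ := hv
  rw [e.injective hr']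

end Transversal

lemma card_filter_ne_ne_fin_four {s t : Fin 4} (hst : s ≠ t) : #{l | s ≠ l ∧ t ≠ l} = 2 := by
  revert s t
  decide

/-- For every positive integer `m` there exists a (3,2)-GDD of type `m⁴`:
a multiset of 3-element blocks on `Fin m × Fin 4` (groups `Fin m × {i}`) such
that same-group pairs have frequency 0 and every cross-group pair has
frequency exactly 2. -/
theorem gdd_lambda_two_type_m_four_exists (m : ℕ) (hm : 1 ≤ m) :
    ∃ B : Multiset (Finset (Fin m × Fin 4)),
      (∀ b ∈ B, b.card = 3) ∧
      (∀ x y : Fin m × Fin 4, x ≠ y → x.2 = y.2 →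
        pairFreq B {x, y} = 0) ∧
      (∀ x y : Fin m × Fin 4, x.2 ≠ y.2 → pairFreq B {x, y} = 2) := by
  have : NeZero m := ⟨by omega⟩
  refine ⟨∑ l : Fin 4, transversalBlocks (Fin m) l.succAboveEmb, ?_, ?_, ?_⟩
  · intro b hb
    obtain ⟨l, -, hb⟩ := Multiset.mem_sum.1 hb
    obtain ⟨v, -, rfl⟩ := Multiset.mem_map.1 hb
    exact card_transversalBlock _ v
  · rintro ⟨x, s⟩ ⟨y, t⟩ hxy (rfl : s = t)
    have hxy : x ≠ y := fun h => hxy (h ▸ rfl)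
    simp [pairFreq_sum, pairFreq_transversalBlocks_of_eq _ _ hxy]
  · rintro ⟨x, s⟩ ⟨y, t⟩ (hst : s ≠ t)
    simp only [pairFreq_sum, pairFreq_transversalBlocks_of_ne _ hst]
    simpa [Fin.coe_succAboveEmb, sum_boole] using card_filter_ne_ne_fin_four hst
end

section
/- There is no SBTS_0(4): no multiset of 3-element subsets of a 4-element set has pair frequencies forming a bijection onto {0,1,2,3,4,5}. -/
section

variable {V : Type*} [DecidableEq V]

theorem Finset.mem_of_notMem_of_card_add_one_eq [Fintype V] {t : Finset V} {b x : V}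
    (ht : t.card + 1 = Fintype.card V) (hb : b ∉ t) (hx : x ≠ b) : x ∈ t := by
  have hsub : t ⊆ {b}ᶜ := fun y hy => Finset.mem_compl.mpr fun hyb =>
    hb (Finset.mem_singleton.mp hyb ▸ hy)
  have hcard : ({b}ᶜ : Finset V).card ≤ t.card := by
    rw [Finset.card_compl, Finset.card_singleton]; omega
  rw [Finset.eq_of_subset_of_card_le hsub hcard]
  simpa using hx

theorem pairFreq_congr {B : Multiset (Finset V)} {P Q : Finset V}
    (h : ∀ t ∈ B, P ⊆ t ↔ Q ⊆ t) : pairFreq B P = pairFreq B Q :=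
  congrArg Multiset.card (Multiset.filter_congr h)

theorem not_subset_of_pairFreq_eq_zero {B : Multiset (Finset V)} {P t : Finset V}
    (h : pairFreq B P = 0) (ht : t ∈ B) : ¬P ⊆ t :=
  Multiset.filter_eq_nil.mp (Multiset.card_eq_zero.mp h) t ht

theorem pairFreq_pair_eq_of_pairFreq_pair_eq_zero [Fintype V] {B : Multiset (Finset V)}
    (hB : ∀ t ∈ B, t.card + 1 = Fintype.card V) {a b c d : V} (hcb : c ≠ b) (hdb : d ≠ b)
    (h0 : pairFreq B {a, b} = 0) : pairFreq B {a, c} = pairFreq B {a, d} := by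
  refine pairFreq_congr fun t ht => ?_
  simp only [Finset.insert_subset_iff, Finset.singleton_subset_iff]
  by_cases hat : a ∈ t
  · have hbt : b ∉ t := fun hbt =>
      not_subset_of_pairFreq_eq_zero h0 ht (Finset.insert_subset hat (by simpa using hbt))
    have hmem {x : V} (hx : x ≠ b) : x ∈ t :=
      Finset.mem_of_notMem_of_card_add_one_eq (hB t ht) hbt hx
    exact iff_of_true ⟨hat, hmem hcb⟩ ⟨hat, hmem hdb⟩
  · exact iff_of_false (fun h => hat h.1) (fun h => hat h.1)

end

theorem exists_two_points_avoiding (a b : Fin 4) :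
    ∃ c d : Fin 4, c ≠ a ∧ c ≠ b ∧ d ≠ a ∧ d ≠ b ∧ c ≠ d := by
  revert a b; decide

/-- There is no SBTS₀(4): no multiset of 3-element subsets of a 4-element set
has pair frequencies forming a bijection onto `{0,1,2,3,4,5}`. -/
theorem no_sbts_zero_four :
    ¬∃ B : Multiset (Finset (Fin 4)),
      (∀ b ∈ B, b.card = 3) ∧
      (∀ P : Finset (Fin 4), P.card = 2 → pairFreq B P < 6) ∧
      (∀ P Q : Finset (Fin 4), P.card = 2 → Q.card = 2 →
        pairFreq B P = pairFreq B Q → P = Q) ∧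
      (∀ n < 6, ∃ P : Finset (Fin 4), P.card = 2 ∧ pairFreq B P = n) := by
  rintro ⟨B, hB, -, hinj, hsurj⟩
  obtain ⟨P, hP, hP0⟩ := hsurj 0 (by norm_num)
  obtain ⟨a, b, -, rfl⟩ := Finset.card_eq_two.mp hP
  obtain ⟨c, d, hca, hcb, hda, hdb, hcd⟩ := exists_two_points_avoiding a b
  have hfreq : pairFreq B {a, c} = pairFreq B {a, d} :=
    pairFreq_pair_eq_of_pairFreq_pair_eq_zero (fun t ht => by simp [hB t ht]) hcb hdb hP0
  have hpair := hinj _ _ (Finset.card_pair hca.symm) (Finset.card_pair hda.symm) hfreq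
  have hc : c ∈ ({a, d} : Finset (Fin 4)) := hpair ▸ by simp
  simp [hca, hcd] at hc
end

section
/- There exists an SBGDD_0 of type 2^4: a multiset of 3-element blocks on an 8-point set partitioned into 4 groups of size 2, such that same-group pairs have frequency 0 and the 24 cross-group pairs have frequencies exactly {0, 1, ..., 23}. -/
/-- A Sarvate-Beam group divisible design SBGDD_μ of type `g^u`:
a multiset `B` of 3-element blocks on a point set `V` with group map `grp`
(each group of size `g`), such that same-group pairs have frequency 0 and the
frequencies of cross-group pairs form a bijection onto
`{μ, μ+1, …, μ + g²·C(u,2) − 1}`. -/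
def IsSBGDD {V : Type*} [Fintype V] [DecidableEq V] (g u μ : ℕ)
    (grp : V → Fin u) (B : Multiset (Finset V)) : Prop :=
  (∀ i : Fin u, (Finset.univ.filter (fun x => grp x = i)).card = g) ∧
  (∀ b ∈ B, b.card = 3) ∧
  (∀ x y : V, x ≠ y → grp x = grp y → pairFreq B {x, y} = 0) ∧
  (∀ x y : V, grp x ≠ grp y →
    pairFreq B {x, y} ∈ Finset.Ico μ (μ + g ^ 2 * u.choose 2)) ∧
  (∀ x y x' y' : V, grp x ≠ grp y → grp x' ≠ grp y' →
    pairFreq B {x, y} = pairFreq B {x', y'} → ({x, y} : Finset V) = {x', y'}) ∧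
  (∀ n ∈ Finset.Ico μ (μ + g ^ 2 * u.choose 2),
    ∃ x y : V, grp x ≠ grp y ∧ pairFreq B {x, y} = n)

def blocksWithMultiplicity {V : Type*} (l : List (ℕ × Finset V)) : Multiset (Finset V) :=
  (l.flatMap fun p => List.replicate p.1 p.2 : List (Finset V))

theorem card_filter_snd_eq {α β : Type*} [Fintype α] [Fintype β] [DecidableEq β] (i : β) :
    (Finset.univ.filter fun x : α × β => x.2 = i).card = Fintype.card α := by
  rw [show (Finset.univ.filter fun x : α × β => x.2 = i) = Finset.univ ×ˢ {i} by
    ext ⟨a, b⟩; simp [eq_comm]]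
  simp

theorem pairFreq_eq_zero_of_transversal {V U : Type*} [DecidableEq V] {grp : V → U}
    {B : Multiset (Finset V)} (hB : ∀ b ∈ B, ∀ x ∈ b, ∀ y ∈ b, grp x = grp y → x = y)
    {x y : V} (hxy : x ≠ y) (hgrp : grp x = grp y) : pairFreq B {x, y} = 0 := by
  refine Multiset.card_eq_zero.2 (Multiset.filter_eq_nil.2 fun b hb hsub => hxy ?_)
  exact hB b hb x (hsub (by simp)) y (hsub (by simp)) hgrp

/-- The paper's block list, with the point `x` of group `i ∈ {a, b, c, d} = {0, 1, 2, 3}` encoded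
as `(0, i)` and `x'` as `(1, i)`. -/
def sbgddBlocks : Multiset (Finset (Fin 2 × Fin 4)) :=
  blocksWithMultiplicity
    [(1, {(0,0), (1,1), (0,2)}), (1, {(0,0), (1,1), (1,2)}),
     (2, {(0,0), (1,1), (0,3)}), (2, {(0,0), (1,1), (1,3)}),
     (3, {(0,0), (0,2), (0,3)}), (4, {(0,0), (0,2), (1,3)}),
     (4, {(0,0), (1,2), (0,3)}), (5, {(0,0), (1,2), (1,3)}),
     (1, {(1,0), (0,1), (1,3)}), (1, {(1,0), (1,1), (0,3)}),
     (1, {(1,0), (1,1), (1,3)}), (1, {(1,0), (0,2), (0,3)}),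
     (2, {(1,0), (0,2), (1,3)}), (2, {(1,0), (1,2), (0,3)}),
     (3, {(1,0), (1,2), (1,3)}), (6, {(0,1), (0,2), (0,3)}),
     (8, {(0,1), (0,2), (1,3)}), (6, {(0,1), (1,2), (0,3)}),
     (7, {(0,1), (1,2), (1,3)}), (7, {(1,1), (0,2), (0,3)}),
     (7, {(1,1), (0,2), (1,3)}), (10, {(1,1), (1,2), (0,3)}),
     (8, {(1,1), (1,2), (1,3)})]

set_option maxRecDepth 10000

theorem card_of_mem_sbgddBlocks : ∀ b ∈ sbgddBlocks, b.card = 3 := by decide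

theorem transversal_of_mem_sbgddBlocks :
    ∀ b ∈ sbgddBlocks, ∀ x ∈ b, ∀ y ∈ b, x.2 = y.2 → x = y := by decide

theorem pairFreq_sbgddBlocks_lt {x y : Fin 2 × Fin 4} (h : x.2 ≠ y.2) :
    pairFreq sbgddBlocks {x, y} < 24 := by revert x y; decide

theorem pairFreq_sbgddBlocks_inj {x y x' y' : Fin 2 × Fin 4} (h : x.2 ≠ y.2) (h' : x'.2 ≠ y'.2)
    (hf : pairFreq sbgddBlocks {x, y} = pairFreq sbgddBlocks {x', y'}) :
    ({x, y} : Finset _) = {x', y'} := by revert x y x' y'; decide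

theorem exists_pairFreq_sbgddBlocks_eq {n : ℕ} (hn : n < 24) :
    ∃ x y : Fin 2 × Fin 4, x.2 ≠ y.2 ∧ pairFreq sbgddBlocks {x, y} = n := by
  revert n; decide

/-- There exists an SBGDD₀ of type `2⁴`: a multiset of 3-element blocks on an
8-point set partitioned into 4 groups of size 2, with same-group pair
frequencies 0 and cross-group pair frequencies exactly `{0, 1, …, 23}`. -/
theorem sbgdd_type_two_four_exists :
    ∃ B : Multiset (Finset (Fin 2 × Fin 4)), IsSBGDD 2 4 0 Prod.snd B := by
  refine ⟨sbgddBlocks, fun i => card_filter_snd_eq i, card_of_mem_sbgddBlocks,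
    fun _ _ hxy => pairFreq_eq_zero_of_transversal transversal_of_mem_sbgddBlocks hxy,
    fun _ _ h => ?_, fun _ _ _ _ => pairFreq_sbgddBlocks_inj, fun n hn => ?_⟩
  · exact Finset.mem_Ico.2 ⟨Nat.zero_le _, pairFreq_sbgddBlocks_lt h⟩
  · exact exists_pairFreq_sbgddBlocks_eq (Finset.mem_Ico.1 hn).2
end

section
/- For μ ≥ 1, there exists an SBTS_μ(4) if and only if one always exists; concretely, for every μ ≥ 1 there is a multiset of 3-element subsets of a 4-set whose six pair frequencies are exactly {μ, μ+1, μ+2, μ+3, μ+4, μ+5}. -/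
open Finset

lemma Multiset.countP_replicate {α : Type*} (p : α → Prop) [DecidablePred p] (n : ℕ) (a : α) :
    (Multiset.replicate n a).countP p = if p a then n else 0 := by
  rw [← Multiset.coe_replicate, Multiset.coe_countP, List.countP_replicate]
  simp

section ComplementDesign

variable {V : Type*} [Fintype V] [DecidableEq V]

def complementDesign (x : V → ℕ) : Multiset (Finset V) :=
  ∑ i, Multiset.replicate (x i) {i}ᶜ

lemma card_of_mem_complementDesign {x : V → ℕ} {b : Finset V} (hb : b ∈ complementDesign x) :
    b.card = Fintype.card V - 1 := by
  obtain ⟨i, -, hi⟩ := Multiset.mem_sum.1 hb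
  rw [Multiset.eq_of_mem_replicate hi, card_compl, card_singleton]

lemma pairFreq_complementDesign (x : V → ℕ) (P : Finset V) :
    pairFreq (complementDesign x) P = ∑ i ∈ Pᶜ, x i := by
  rw [pairFreq, ← Multiset.countP_eq_card_filter, complementDesign,
    ← Multiset.coe_countPAddMonoidHom, map_sum]
  simp only [Multiset.coe_countPAddMonoidHom, Multiset.countP_replicate,
    subset_compl_singleton]
  rw [← sum_filter]
  congr 1
  ext i
  simp

lemma pairFreq_complementDesign_add_const (c : V → ℕ) (t : ℕ) (P : Finset V) :
    pairFreq (complementDesign (fun i => c i + t)) P = ∑ i ∈ Pᶜ, c i + Pᶜ.card * t := by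
  rw [pairFreq_complementDesign, sum_add_distrib, sum_const, smul_eq_mul]

end ComplementDesign

def BijOnPairsIcc {V : Type*} (f : Finset V → ℕ) (μ k : ℕ) : Prop :=
  (∀ P : Finset V, P.card = 2 → f P ∈ Icc μ (μ + k)) ∧
  (∀ P Q : Finset V, P.card = 2 → Q.card = 2 → f P = f Q → P = Q) ∧
  (∀ n ∈ Icc μ (μ + k), ∃ P : Finset V, P.card = 2 ∧ f P = n)

lemma BijOnPairsIcc.add_const {V : Type*} {f g : Finset V → ℕ} {μ k : ℕ}
    (hg : BijOnPairsIcc g μ k) (c : ℕ) (hfg : ∀ P : Finset V, P.card = 2 → f P = g P + c) :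
    BijOnPairsIcc f (μ + c) k := by
  obtain ⟨hmaps, hinj, hsurj⟩ := hg
  refine ⟨fun P hP => ?_, fun P Q hP hQ h => hinj P Q hP hQ ?_, fun n hn => ?_⟩
  · have := mem_Icc.1 (hmaps P hP)
    rw [hfg P hP, mem_Icc]
    omega
  · rw [hfg P hP, hfg Q hQ] at h
    omega
  · obtain ⟨P, hP, hgP⟩ := hsurj (n - c) (by rw [mem_Icc] at hn ⊢; omega)
    refine ⟨P, hP, ?_⟩
    rw [hfg P hP, hgP]
    have := (mem_Icc.1 hn).1
    omega

lemma bijOnPairsIcc_sum_compl_odd :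
    BijOnPairsIcc (fun P : Finset (Fin 4) => ∑ i ∈ Pᶜ, ![0, 1, 2, 4] i) 1 5 := by
  unfold BijOnPairsIcc
  decide

lemma bijOnPairsIcc_sum_compl_even :
    BijOnPairsIcc (fun P : Finset (Fin 4) => ∑ i ∈ Pᶜ, ![0, 2, 3, 4] i) 2 5 := by
  unfold BijOnPairsIcc
  decide

lemma bijOnPairsIcc_pairFreq_complementDesign {c : Fin 4 → ℕ} {m : ℕ}
    (hc : BijOnPairsIcc (fun P => ∑ i ∈ Pᶜ, c i) m 5) (t : ℕ) :
    BijOnPairsIcc (pairFreq (complementDesign (fun i => c i + t))) (m + 2 * t) 5 :=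
  hc.add_const (2 * t) fun P hP => by
    rw [pairFreq_complementDesign_add_const, card_compl, Fintype.card_fin, hP]

/-- For every `μ ≥ 1` there exists an SBTS_μ(4): a multiset of 3-element
subsets of a 4-set whose six pair frequencies are exactly
`{μ, μ+1, μ+2, μ+3, μ+4, μ+5}`. -/
theorem sbts_four_exists (μ : ℕ) (hμ : 1 ≤ μ) :
    ∃ B : Multiset (Finset (Fin 4)),
      (∀ b ∈ B, b.card = 3) ∧
      (∀ P : Finset (Fin 4), P.card = 2 →
        pairFreq B P ∈ Finset.Icc μ (μ + 5)) ∧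
      (∀ P Q : Finset (Fin 4), P.card = 2 → Q.card = 2 →
        pairFreq B P = pairFreq B Q → P = Q) ∧
      (∀ n ∈ Finset.Icc μ (μ + 5),
        ∃ P : Finset (Fin 4), P.card = 2 ∧ pairFreq B P = n) := by
  obtain ⟨c, m, t, hc, rfl⟩ : ∃ (c : Fin 4 → ℕ) (m t : ℕ),
      BijOnPairsIcc (fun P => ∑ i ∈ Pᶜ, c i) m 5 ∧ μ = m + 2 * t := by
    obtain ⟨t, rfl | rfl⟩ := Nat.even_or_odd' μ
    · exact ⟨_, 2, t - 1, bijOnPairsIcc_sum_compl_even, by omega⟩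
    · exact ⟨_, 1, t, bijOnPairsIcc_sum_compl_odd, by omega⟩
  exact ⟨complementDesign (fun i => c i + t), fun b hb => card_of_mem_complementDesign hb,
    bijOnPairsIcc_pairFreq_complementDesign hc t⟩
end

section
/- For positive integers g, μ, u with u ≥ 3: if an SBGDD_μ of type g^u exists with μ ≥ 1, then 3 ∣ g or 3 ∣ μ or u ≡ 0,1 (mod 3). (Necessity direction of the main classification.) -/
open Finset

section Counting

variable {V : Type*} [DecidableEq V]

lemma pairFreq_cons (a : Finset V) (B : Multiset (Finset V)) (P : Finset V) :
    pairFreq (a ::ₘ B) P = pairFreq B P + if P ⊆ a then 1 else 0 := by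
  unfold pairFreq
  split_ifs with hP <;> simp [hP]

lemma sum_pairFreq_powersetCard [Fintype V] (B : Multiset (Finset V)) (t : ℕ) :
    ∑ P ∈ (univ : Finset V).powersetCard t, pairFreq B P = (B.map fun b => b.card.choose t).sum := by
  induction B using Multiset.induction_on with
  | empty => simp [pairFreq]
  | cons a B ih =>
    have hfilter : ((univ : Finset V).powersetCard t).filter (· ⊆ a) = a.powersetCard t := by
      ext P
      simp [mem_powersetCard, and_comm]
    simp only [pairFreq_cons, sum_add_distrib, ih, sum_boole, hfilter, card_powersetCard,
      Multiset.map_cons, Multiset.sum_cons, Nat.cast_id, add_comm]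

end Counting

lemma sum_Ico_mod_three {μ N : ℕ} (hN : N % 3 = 1) :
    (∑ n ∈ Ico μ (μ + N), n) % 3 = μ % 3 := by
  have hgauss : (∑ n ∈ Ico μ (μ + N), n) * 2 = N * μ * 2 + N * (N - 1) := by
    rw [sum_Ico_eq_sum_range, Nat.add_sub_cancel_left, sum_add_distrib, sum_const, card_range,
      smul_eq_mul, add_mul, sum_range_id_mul_two]
  obtain ⟨a, rfl⟩ : ∃ a, N = 3 * a + 1 := ⟨N / 3, by omega⟩
  have hsum : (∑ n ∈ Ico μ (μ + (3 * a + 1)), n) * 2 = μ * 2 + 3 * (2 * a * μ + a * (3 * a + 1)) := by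
    rw [hgauss, Nat.add_sub_cancel]
    ring
  omega

lemma sq_mod_three_of_not_dvd {g : ℕ} (hg : ¬ 3 ∣ g) : g ^ 2 % 3 = 1 := by
  rw [Nat.pow_mod]
  have : g % 3 = 1 ∨ g % 3 = 2 := by omega
  rcases this with h | h <;> rw [h]

lemma choose_two_mod_three {u : ℕ} (hu : u % 3 = 2) : u.choose 2 % 3 = 1 := by
  have htwice : 2 * u.choose 2 = u * (u - 1) := by
    rw [Nat.choose_two_right, Nat.mul_div_cancel' (Nat.even_mul_pred_self u).two_dvd]
  obtain ⟨k, rfl⟩ : ∃ k, u = 3 * k + 2 := ⟨u / 3, by omega⟩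
  have : (3 * k + 2) * (3 * k + 2 - 1) = 3 * (3 * k * k + 3 * k) + 2 := by
    rw [show 3 * k + 2 - 1 = 3 * k + 1 by omega]
    ring
  omega

section Design

variable {V : Type*} [Fintype V] [DecidableEq V] {u : ℕ} (grp : V → Fin u)

def crossPairs : Finset (Finset V) :=
  (univ.filter fun p : V × V => grp p.1 ≠ grp p.2).image fun p => {p.1, p.2}

variable {grp}

lemma mem_crossPairs {P : Finset V} :
    P ∈ crossPairs grp ↔ ∃ x y, grp x ≠ grp y ∧ {x, y} = P := by
  simp [crossPairs]

lemma crossPairs_subset_powersetCard_two : crossPairs grp ⊆ (univ : Finset V).powersetCard 2 := by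
  intro P hP
  obtain ⟨x, y, hxy, rfl⟩ := mem_crossPairs.mp hP
  exact mem_powersetCard.mpr ⟨subset_univ _, card_pair fun h => hxy (congrArg grp h)⟩

variable {g μ : ℕ} {B : Multiset (Finset V)}

lemma IsSBGDD.sum_pairFreq_crossPairs (h : IsSBGDD g u μ grp B) :
    ∑ P ∈ crossPairs grp, pairFreq B P = ∑ n ∈ Ico μ (μ + g ^ 2 * u.choose 2), n := by
  obtain ⟨-, -, -, hrange, hinj, hsurj⟩ := h
  refine sum_bij (fun P _ => pairFreq B P) ?_ ?_ ?_ fun _ _ => rfl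
  · intro P hP
    obtain ⟨x, y, hxy, rfl⟩ := mem_crossPairs.mp hP
    exact hrange x y hxy
  · intro P hP Q hQ hPQ
    obtain ⟨x, y, hxy, rfl⟩ := mem_crossPairs.mp hP
    obtain ⟨x', y', hxy', rfl⟩ := mem_crossPairs.mp hQ
    exact hinj x y x' y' hxy hxy' hPQ
  · intro n hn
    obtain ⟨x, y, hxy, rfl⟩ := hsurj n hn
    exact ⟨{x, y}, mem_crossPairs.mpr ⟨x, y, hxy, rfl⟩, rfl⟩

lemma IsSBGDD.pairFreq_eq_zero_of_notMem_crossPairs (h : IsSBGDD g u μ grp B)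
    {P : Finset V} (hP : P ∈ (univ : Finset V).powersetCard 2) (hcross : P ∉ crossPairs grp) :
    pairFreq B P = 0 := by
  obtain ⟨x, y, hne, rfl⟩ := card_eq_two.mp (mem_powersetCard.mp hP).2
  exact h.2.2.1 x y hne (of_not_not fun hxy => hcross (mem_crossPairs.mpr ⟨x, y, hxy, rfl⟩))

lemma IsSBGDD.three_dvd_sum_Ico (h : IsSBGDD g u μ grp B) :
    3 ∣ ∑ n ∈ Ico μ (μ + g ^ 2 * u.choose 2), n := by
  have hblocks : (B.map fun b => b.card.choose 2).sum = 3 * Multiset.card B := by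
    rw [Multiset.map_congr rfl fun b hb => by rw [h.2.1 b hb], Multiset.map_const',
      Multiset.sum_replicate, smul_eq_mul, mul_comm]
    rfl
  rw [← h.sum_pairFreq_crossPairs, sum_subset crossPairs_subset_powersetCard_two
    fun P hP hcross => h.pairFreq_eq_zero_of_notMem_crossPairs hP hcross,
    sum_pairFreq_powersetCard, hblocks]
  exact dvd_mul_right 3 _

end Design

theorem sbgdd_necessity_general (g u μ : ℕ)
    (V : Type*) [Fintype V] [DecidableEq V] (grp : V → Fin u)
    (B : Multiset (Finset V)) (h : IsSBGDD g u μ grp B) :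
    3 ∣ g ∨ 3 ∣ μ ∨ u % 3 = 0 ∨ u % 3 = 1 := by
  by_cases hg : 3 ∣ g
  · exact Or.inl hg
  by_cases hu : u % 3 = 0 ∨ u % 3 = 1
  · exact Or.inr (Or.inr hu)
  refine Or.inr (Or.inl ?_)
  have hN : g ^ 2 * u.choose 2 % 3 = 1 := by
    rw [Nat.mul_mod, sq_mod_three_of_not_dvd hg, choose_two_mod_three (by omega)]
  have hdvd := h.three_dvd_sum_Ico
  rw [Nat.dvd_iff_mod_eq_zero, sum_Ico_mod_three hN] at hdvd
  exact Nat.dvd_of_mod_eq_zero hdvd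

/-- Necessity direction of the main classification: for positive `g, μ` and
`u ≥ 3`, if an SBGDD_μ of type `g^u` exists then `3 ∣ g` or `3 ∣ μ` or
`u ≡ 0,1 (mod 3)`. -/
theorem sbgdd_necessity (g u μ : ℕ) (hg : 1 ≤ g) (hμ : 1 ≤ μ) (hu : 3 ≤ u)
    (V : Type*) [Fintype V] [DecidableEq V] (grp : V → Fin u)
    (B : Multiset (Finset V)) (h : IsSBGDD g u μ grp B) :
    3 ∣ g ∨ 3 ∣ μ ∨ u % 3 = 0 ∨ u % 3 = 1 :=
  sbgdd_necessity_general g u μ V grp B h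
end
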